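/- For all sufficiently large x, the number of ordered triples (p1, p2, p3) of primes with x < p_i ≤ 2x such that x^{1/2} log x < P(p1+p2) ≤ 2 x^{1/2} log x, x^{1/2} log x < P(p1+p3) ≤ 2 x^{1/2} log x, and P(p1+p3) = P(p2+p3), is O(x^{5/2}). -/

import Mathlib

open Finset Real

def maxPrimeFac (n : ℕ) : ℕ := n.primeFactors.sup id

noncomputable def primesIn (a b : ℝ) : Finset ℕ :=
  (Finset.Icc 1 ⌈b⌉₊).filter fun n => n.Prime ∧ a < (n : ℝ) ∧ (n : ℝ) ≤ b

/-
If `P(p₁ + p₃) = P(p₂ + p₃) = r`, then `r ∣ p₂ + p₃`, so once the pair `(p₁, p₃)` is chosen,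
`p₂ ≤ 2x` lies in a fixed residue class modulo `r > √x log x`; there are `O(x / r) = O(√x / log x)`
such `p₂`. Summing over the `O(x²)` pairs `(p₁, p₃)` gives `O(x^{5/2} / log x)` triples.
-/

lemma maxPrimeFac_dvd {n : ℕ} (hn : n ≠ 1) : maxPrimeFac n ∣ n := by
  rcases eq_or_ne n 0 with rfl | hn0
  · exact dvd_zero _
  obtain ⟨p, hp, hsup⟩ := exists_mem_eq_sup n.primeFactors
    (Nat.nonempty_primeFactors.mpr (by omega)) id
  rw [maxPrimeFac, hsup]
  exact Nat.dvd_of_mem_primeFactors hp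

lemma primesIn_subset_Ioc (a b : ℝ) : primesIn a b ⊆ Ioc 0 ⌊b⌋₊ := by
  intro n hn
  simp only [primesIn, mem_filter] at hn
  exact mem_Ioc.mpr ⟨hn.2.1.pos, Nat.le_floor hn.2.2.2⟩

lemma card_filter_dvd_add_le {s : Finset ℕ} {N : ℕ} (hs : s ⊆ Ioc 0 N) (r c : ℕ) :
    #{n ∈ s | r ∣ n + c} ≤ (N + c) / r := by
  calc #{n ∈ s | r ∣ n + c}
      ≤ #{k ∈ range (N + c).succ | k ≠ 0 ∧ r ∣ k} := by
        refine card_le_card_of_injOn (· + c) (fun n hn => ?_) (add_left_injective c).injOn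
        simp only [coe_filter, Set.mem_ofPred_eq] at hn
        have := mem_Ioc.mp (hs hn.1)
        simp only [coe_filter, mem_range, Set.mem_ofPred_eq]
        exact ⟨by omega, by omega, hn.2⟩
    _ = (N + c) / r := Nat.card_multiples' _ _

lemma card_filter_dvd_add_le_div {s : Finset ℕ} {N : ℕ} (hs : s ⊆ Ioc 0 N) {r c : ℕ}
    (hc : c ≤ N) {R : ℝ} (hR : 0 < R) (hr : R < r) :
    (#{n ∈ s | r ∣ n + c} : ℝ) ≤ 2 * N / R :=
  calc (#{n ∈ s | r ∣ n + c} : ℝ)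
      ≤ ((N + c) / r : ℕ) := by exact_mod_cast card_filter_dvd_add_le hs r c
    _ ≤ (N + c : ℝ) / r := by exact_mod_cast Nat.cast_div_le
    _ ≤ 2 * N / R := by
        gcongr
        exact_mod_cast (by omega : N + c ≤ 2 * N)

theorem card_triples_maxPrimeFac_eq_le {A : Finset ℕ} {N : ℕ} (hA : A ⊆ Ioc 0 N) {R : ℝ}
    (hR : 0 < R) :
    (#{t ∈ A ×ˢ A ×ˢ A | R < maxPrimeFac (t.1 + t.2.2) ∧
        maxPrimeFac (t.1 + t.2.2) = maxPrimeFac (t.2.1 + t.2.2)} : ℝ) ≤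
      #A ^ 2 * (2 * N / R) := by
  set P := {p ∈ A ×ˢ A | R < maxPrimeFac (p.1 + p.2)}
  set F : ℕ × ℕ → Finset ℕ := fun p => {b ∈ A | maxPrimeFac (p.1 + p.2) ∣ b + p.2}
  have hcover : {t ∈ A ×ˢ A ×ˢ A | R < maxPrimeFac (t.1 + t.2.2) ∧
      maxPrimeFac (t.1 + t.2.2) = maxPrimeFac (t.2.1 + t.2.2)} ⊆
        P.biUnion fun p => (F p).image fun b => (p.1, b, p.2) := by
    rintro ⟨a, b, c⟩ ht
    simp only [mem_filter, mem_product] at ht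
    obtain ⟨⟨ha, hb, hc⟩, hr, heq⟩ := ht
    have hbc : b + c ≠ 1 := by
      have := (mem_Ioc.mp (hA hb)).1; have := (mem_Ioc.mp (hA hc)).1; omega
    simp only [mem_biUnion, mem_image, P, F, mem_filter, mem_product]
    exact ⟨(a, c), ⟨⟨ha, hc⟩, hr⟩, b, ⟨hb, heq ▸ maxPrimeFac_dvd hbc⟩, rfl⟩
  have hfiber : ∀ p ∈ P, (#(F p) : ℝ) ≤ 2 * N / R := by
    intro p hp
    simp only [P, mem_filter, mem_product] at hp
    exact card_filter_dvd_add_le_div hA (mem_Ioc.mp (hA hp.1.2)).2 hR hp.2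
  calc _ ≤ (∑ p ∈ P, #(F p) : ℝ) := by
        exact_mod_cast (card_le_card hcover).trans <|
          card_biUnion_le.trans <| sum_le_sum fun _ _ => card_image_le
    _ ≤ #P * (2 * N / R) := by simpa using sum_le_card_nsmul P _ _ hfiber
    _ ≤ #A ^ 2 * (2 * N / R) := by
        gcongr
        exact_mod_cast (card_filter_le _ _).trans (card_product A A).le |>.trans (sq _).ge

theorem stmt_6 :
    ∃ C : ℝ, 0 < C ∧ ∃ x0 : ℝ, ∀ x : ℝ, x0 ≤ x →
      (((primesIn x (2 * x) ×ˢ primesIn x (2 * x) ×ˢ primesIn x (2 * x)).filter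
          fun t =>
            (Real.sqrt x * Real.log x < (maxPrimeFac (t.1 + t.2.1) : ℝ) ∧
              (maxPrimeFac (t.1 + t.2.1) : ℝ) ≤ 2 * Real.sqrt x * Real.log x) ∧
            (Real.sqrt x * Real.log x < (maxPrimeFac (t.1 + t.2.2) : ℝ) ∧
              (maxPrimeFac (t.1 + t.2.2) : ℝ) ≤ 2 * Real.sqrt x * Real.log x) ∧
            maxPrimeFac (t.1 + t.2.2) = maxPrimeFac (t.2.1 + t.2.2)).card : ℝ)
        ≤ C * x ^ ((5 : ℝ) / 2) := by
  refine ⟨16, by norm_num, exp 1, fun x hx => ?_⟩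
  have hx0 : 0 < x := (exp_pos 1).trans_le hx
  have hlog : 1 ≤ log x := (le_log_iff_exp_le hx0).mpr hx
  have hA := primesIn_subset_Ioc x (2 * x)
  have hN : (⌊2 * x⌋₊ : ℝ) ≤ 2 * x := Nat.floor_le (by positivity)
  have hcard : (#(primesIn x (2 * x)) : ℝ) ≤ 2 * x :=
    le_trans (by exact_mod_cast (card_le_card hA).trans (Nat.card_Ioc 0 _).le) hN
  calc _ ≤ (#(primesIn x (2 * x)) : ℝ) ^ 2 * (2 * ⌊2 * x⌋₊ / (√x * log x)) := by
        refine le_trans ?_ (card_triples_maxPrimeFac_eq_le hA (by positivity))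
        exact Nat.cast_le.mpr <| card_le_card <|
          monotone_filter_right _ fun t _ ht => ⟨ht.2.1.1, ht.2.2⟩
    _ ≤ (2 * x) ^ 2 * (2 * (2 * x) / (√x * log x)) := by gcongr ?_ ^ 2 * (2 * ?_ / _)
    _ ≤ 16 * (x ^ 2 * √x) := by
        rw [mul_div_assoc', div_le_iff₀ (by positivity)]
        calc (2 * x) ^ 2 * (2 * (2 * x)) = 16 * x ^ 3 := by ring
          _ ≤ 16 * x ^ 3 * log x := le_mul_of_one_le_right (by positivity) hlog
          _ = 16 * (x ^ 2 * √x) * (√x * log x) := by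
              rw [show x ^ 3 = x ^ 2 * (√x * √x) by rw [mul_self_sqrt hx0.le]; ring]; ring
    _ = 16 * x ^ ((5 : ℝ) / 2) := by
        rw [sqrt_eq_rpow, ← rpow_natCast, ← rpow_add hx0]
        norm_num
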